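/- arXiv:1707.06034 — 2 statements merged into one kernel-verified Lean document; each statement's English description precedes it below -/
import Mathlib

section
/- Convergence of Carathéodory compositions in Lebesgue spaces (Lemma A.1). Let Ω be a bounded (Lebesgue measurable) subset of ℝ^N, N ∈ ℕ, and for each n ∈ ℕ let H_n : Ω × ℝ^N → ℝ be a Carathéodory function such that: (a) there exist constants C > 0 and γ > 0 with |H_n(x,ξ)| ≤ C(1 + |ξ|^γ) for a.e. x ∈ Ω, all ξ ∈ ℝ^N and all n ∈ ℕ; and (b) there is a Carathéodory function H : Ω × ℝ^N → ℝ such that for a.e. x ∈ Ω, H_n(x,·) → H(x,·) uniformly on compact subsets of ℝ^N as n → ∞. If p ∈ [max(1,γ), ∞) and (u_n)_{n∈ℕ} is a sequence of ℝ^N-valued functions with u_n → u in L^p(Ω)^N as n → ∞, then H_n(·, u_n(·)) → H(·, u(·)) in L^{p/γ}(Ω) as n → ∞. -/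
open MeasureTheory Filter Topology TopologicalSpace
open scoped ENNReal

/-!
Every subsequence of `uₙ` has a further subsequence `u_{n_k}` with `∫ ‖u_{n_k} - u‖ᵖ ≤ 2⁻ᵏ`, so
`g = ∑ₖ ‖u_{n_k} - u‖ᵖ` is integrable; hence `u_{n_k} → u` a.e. and `‖u_{n_k} - u‖ᵖ ≤ g`.
For a.e. `x` the points `u_{n_k}(x)` together with `u(x)` form a compact set, on which
`H_{n_k}(x, ·) → H(x, ·)` uniformly, and continuity of `H(x, ·)` gives
`H_{n_k}(x, u_{n_k}(x)) → H(x, u(x))`. The growth bound dominates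
`|H_{n_k}(·, u_{n_k}) - H(·, u)|^{p/γ}` by a multiple of `1 + ‖u‖ᵖ + g`, integrable since `Ω` has
finite measure, so dominated convergence applies along the subsequence, and therefore along the
whole sequence.
-/

namespace Real

lemma add_rpow_le_two_rpow_mul_add_rpow {a b q : ℝ} (ha : 0 ≤ a) (hb : 0 ≤ b) (hq : 0 ≤ q) :
    (a + b) ^ q ≤ 2 ^ q * (a ^ q + b ^ q) := by
  have hmax : max a b ^ q ≤ a ^ q + b ^ q := by
    rcases max_choice a b with h | h <;> rw [h]
    · linarith [rpow_nonneg hb q]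
    · linarith [rpow_nonneg ha q]
  calc (a + b) ^ q ≤ (2 * max a b) ^ q := by
        gcongr
        linarith [le_max_left a b, le_max_right a b]
    _ = 2 ^ q * max a b ^ q := mul_rpow zero_le_two (ha.trans (le_max_left a b))
    _ ≤ 2 ^ q * (a ^ q + b ^ q) := by gcongr

lemma abs_rpow_le_of_growth {a s C γ q : ℝ} (hs : 0 ≤ s) (hC : 0 ≤ C) (hq : 0 ≤ q)
    (ha : |a| ≤ C * (1 + s ^ γ)) : |a| ^ q ≤ (2 * C) ^ q * (1 + s ^ (γ * q)) := by
  calc |a| ^ q ≤ (C * (1 + s ^ γ)) ^ q := by gcongr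
    _ = C ^ q * (1 + s ^ γ) ^ q := mul_rpow hC (by positivity)
    _ ≤ C ^ q * (2 ^ q * (1 ^ q + (s ^ γ) ^ q)) := by
        gcongr
        exact add_rpow_le_two_rpow_mul_add_rpow zero_le_one (by positivity) hq
    _ = (2 * C) ^ q * (1 + s ^ (γ * q)) := by
        rw [one_rpow, ← rpow_mul hs, mul_rpow zero_le_two hC]
        ring

lemma abs_sub_rpow_le_of_growth {a b s t C γ q : ℝ} (hs : 0 ≤ s) (ht : 0 ≤ t) (hC : 0 ≤ C)
    (hq : 0 ≤ q) (ha : |a| ≤ C * (1 + s ^ γ)) (hb : |b| ≤ C * (1 + t ^ γ)) :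
    |a - b| ^ q ≤ (4 * C) ^ q * (2 + s ^ (γ * q) + t ^ (γ * q)) := by
  calc |a - b| ^ q ≤ (|a| + |b|) ^ q := by gcongr; exact abs_sub _ _
    _ ≤ 2 ^ q * (|a| ^ q + |b| ^ q) :=
        add_rpow_le_two_rpow_mul_add_rpow (abs_nonneg a) (abs_nonneg b) hq
    _ ≤ 2 ^ q * ((2 * C) ^ q * (1 + s ^ (γ * q)) + (2 * C) ^ q * (1 + t ^ (γ * q))) := by
        gcongr
        · exact abs_rpow_le_of_growth hs hC hq ha
        · exact abs_rpow_le_of_growth ht hC hq hb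
    _ = (4 * C) ^ q * (2 + s ^ (γ * q) + t ^ (γ * q)) := by
        rw [show 4 * C = 2 * (2 * C) by ring, mul_rpow (y := 2 * C) zero_le_two (by positivity)]
        ring

end Real

theorem tendsto_comp_of_forall_isCompact_tendstoUniformlyOn {E β : Type*} [TopologicalSpace E]
    [UniformSpace β] {F : ℕ → E → β} {f : E → β}
    (hF : ∀ K, IsCompact K → TendstoUniformlyOn F f atTop K) {v : ℕ → E} {a : E}
    (hf : ContinuousAt f a) (hv : Tendsto v atTop (𝓝 a)) :
    Tendsto (fun n => F n (v n)) atTop (𝓝 (f a)) :=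
  (hF _ hv.isCompact_insert_range).tendsto_comp hf.continuousWithinAt <|
    tendsto_nhdsWithin_iff.2 ⟨hv, .of_forall fun n => Set.mem_insert_of_mem _ ⟨n, rfl⟩⟩

theorem tendsto_of_tendsto_norm_sub_rpow {E : Type*} [SeminormedAddCommGroup E] {v : ℕ → E}
    {a : E} {p : ℝ} (hp : 0 < p) (hv : Tendsto (fun n => ‖v n - a‖ ^ p) atTop (𝓝 0)) :
    Tendsto v atTop (𝓝 a) := by
  rw [tendsto_iff_norm_sub_tendsto_zero]
  have h := hv.rpow_const (p := p⁻¹) (Or.inr (inv_nonneg.2 hp.le))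
  rw [Real.zero_rpow (inv_ne_zero hp.ne')] at h
  exact h.congr fun n => Real.rpow_rpow_inv (norm_nonneg _) hp.ne'

section

variable {α : Type*} [MeasurableSpace α] {μ : Measure α}

theorem AEMeasurable.caratheodory_comp {E β : Type*} [TopologicalSpace E] [MetrizableSpace E]
    [MeasurableSpace E] [SecondCountableTopology E] [OpensMeasurableSpace E] [TopologicalSpace β]
    [PseudoMetrizableSpace β] [MeasurableSpace β] [BorelSpace β] [Nonempty β] {G : α → E → β}
    (hGm : ∀ ξ, Measurable fun x => G x ξ) (hGc : ∀ᵐ x ∂μ, Continuous (G x)) {w : α → E}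
    (hw : AEMeasurable w μ) : AEMeasurable (fun x => G x (w x)) μ := by
  classical
  -- Make `G x` constant on a measurable null set containing all discontinuity points.
  set T := toMeasurable μ {x | ¬Continuous (G x)}
  have hT : ∀ᵐ x ∂μ, x ∉ T :=
    measure_eq_zero_iff_ae_notMem.1 ((measure_toMeasurable _).trans (ae_iff.1 hGc))
  let G' : E → α → β := fun ξ x => if x ∈ T then Classical.arbitrary β else G x ξ
  have hG' : Measurable (Function.uncurry G') := by
    refine measurable_uncurry_of_continuous_of_measurable (fun x => ?_) fun ξ =>
      Measurable.ite (measurableSet_toMeasurable _ _) measurable_const (hGm ξ)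
    by_cases hx : x ∈ T
    · simpa only [G', hx, if_true] using continuous_const
    · simp only [G', hx, if_false]
      by_contra h
      exact hx (subset_toMeasurable _ _ h)
  refine (hG'.comp_aemeasurable (hw.prodMk aemeasurable_id)).congr ?_
  filter_upwards [hT] with x hx
  simp [G', hx]

theorem integrable_norm_sub_rpow {E : Type*} [NormedAddCommGroup E] {u v : α → E} {p : ℝ}
    (hp : 0 < p) (hu : AEStronglyMeasurable u μ) (hv : AEStronglyMeasurable v μ)
    (hup : Integrable (fun x => ‖u x‖ ^ p) μ) (hvp : Integrable (fun x => ‖v x‖ ^ p) μ) :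
    Integrable (fun x => ‖u x - v x‖ ^ p) μ := by
  have hp' : ENNReal.ofReal p ≠ 0 := ENNReal.ofReal_ne_zero_iff.2 hp
  have key := integrable_norm_rpow_iff (hu.sub hv) hp' ENNReal.ofReal_ne_top
  rw [ENNReal.toReal_ofReal hp.le] at key
  rw [← ENNReal.toReal_ofReal hp.le] at hup hvp
  exact key.2 (((integrable_norm_rpow_iff hu hp' ENNReal.ofReal_ne_top).1 hup).sub
    ((integrable_norm_rpow_iff hv hp' ENNReal.ofReal_ne_top).1 hvp))

section

variable {f : ℕ → α → ℝ}

theorem lintegral_tsum_ofReal_ne_top (hf0 : ∀ n, 0 ≤ᵐ[μ] f n) (hfi : ∀ n, Integrable (f n) μ)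
    (hsum : Summable fun n => ∫ x, f n x ∂μ) :
    ∫⁻ x, ∑' n, ENNReal.ofReal (f n x) ∂μ ≠ ∞ := by
  rw [lintegral_tsum fun n => (hfi n).aemeasurable.ennreal_ofReal]
  simp_rw [← ofReal_integral_eq_lintegral_ofReal (hfi _) (hf0 _)]
  rw [← ENNReal.ofReal_tsum_of_nonneg (fun n => integral_nonneg_of_ae (hf0 n)) hsum]
  exact ENNReal.ofReal_ne_top

theorem ae_summable_of_summable_integral (hf0 : ∀ n, 0 ≤ᵐ[μ] f n)
    (hfi : ∀ n, Integrable (f n) μ) (hsum : Summable fun n => ∫ x, f n x ∂μ) :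
    ∀ᵐ x ∂μ, Summable fun n => f n x := by
  have hfin := ae_lt_top' (AEMeasurable.tsum fun n => (hfi n).aemeasurable.ennreal_ofReal)
    (lintegral_tsum_ofReal_ne_top hf0 hfi hsum)
  filter_upwards [hfin, ae_all_iff.2 hf0] with x hx hx0
  exact (ENNReal.summable_toReal hx.ne).congr fun n => ENNReal.toReal_ofReal (hx0 n)

theorem integrable_tsum_of_summable_integral (hf0 : ∀ n, 0 ≤ᵐ[μ] f n)
    (hfi : ∀ n, Integrable (f n) μ) (hsum : Summable fun n => ∫ x, f n x ∂μ) :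
    Integrable (fun x => ∑' n, f n x) μ := by
  refine (integrable_toReal_of_lintegral_ne_top
    (AEMeasurable.tsum fun n => (hfi n).aemeasurable.ennreal_ofReal)
    (lintegral_tsum_ofReal_ne_top hf0 hfi hsum)).congr ?_
  filter_upwards [ae_summable_of_summable_integral hf0 hfi hsum, ae_all_iff.2 hf0] with x hx hx0
  rw [← ENNReal.ofReal_tsum_of_nonneg hx0 hx, ENNReal.toReal_ofReal (tsum_nonneg hx0)]

/-- A partial converse of dominated convergence. -/
theorem exists_subseq_dominated_ae_tendsto_zero (hf0 : ∀ n, 0 ≤ᵐ[μ] f n)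
    (hfi : ∀ n, Integrable (f n) μ) (hf : Tendsto (fun n => ∫ x, f n x ∂μ) atTop (𝓝 0)) :
    ∃ φ : ℕ → ℕ, StrictMono φ ∧ ∃ g : α → ℝ, Integrable g μ ∧
      (∀ᵐ x ∂μ, ∀ k, f (φ k) x ≤ g x) ∧ ∀ᵐ x ∂μ, Tendsto (fun k => f (φ k) x) atTop (𝓝 0) := by
  obtain ⟨φ, hφ, hφle⟩ := extraction_forall_of_eventually fun k =>
    hf.eventually (ge_mem_nhds (by positivity : (0 : ℝ) < (1 / 2) ^ k))
  have hsum : Summable fun k => ∫ x, f (φ k) x ∂μ :=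
    (summable_geometric_of_lt_one (by norm_num) (by norm_num)).of_nonneg_of_le
      (fun k => integral_nonneg_of_ae (hf0 _)) hφle
  have hsummable := ae_summable_of_summable_integral (fun k => hf0 (φ k)) (fun k => hfi _) hsum
  refine ⟨φ, hφ, fun x => ∑' k, f (φ k) x,
    integrable_tsum_of_summable_integral (fun k => hf0 (φ k)) (fun k => hfi _) hsum, ?_,
    hsummable.mono fun x hx => hx.tendsto_atTop_zero⟩
  filter_upwards [hsummable, ae_all_iff.2 hf0] with x hx hx0 k
  exact hx.le_tsum k fun j _ => hx0 (φ j)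

end

theorem tendsto_integral_abs_sub_caratheodory_comp_rpow [IsFiniteMeasure μ]
    {E : Type*} [NormedAddCommGroup E] [MeasurableSpace E] [SecondCountableTopology E]
    [BorelSpace E] {F : ℕ → α → E → ℝ} {G : α → E → ℝ}
    (hFm : ∀ n ξ, Measurable fun x => F n x ξ) (hFc : ∀ n, ∀ᵐ x ∂μ, Continuous (F n x))
    (hGm : ∀ ξ, Measurable fun x => G x ξ) (hGc : ∀ᵐ x ∂μ, Continuous (G x))
    {C γ p q : ℝ} (hC : 0 ≤ C) (hp : 0 ≤ p) (hq : 0 < q) (hγq : γ * q = p)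
    (hFgrowth : ∀ n, ∀ᵐ x ∂μ, ∀ ξ, |F n x ξ| ≤ C * (1 + ‖ξ‖ ^ γ))
    (hGgrowth : ∀ᵐ x ∂μ, ∀ ξ, |G x ξ| ≤ C * (1 + ‖ξ‖ ^ γ))
    (hunif : ∀ᵐ x ∂μ, ∀ K, IsCompact K → TendstoUniformlyOn (fun n => F n x) (G x) atTop K)
    {v : ℕ → α → E} {w : α → E} (hv : ∀ n, AEMeasurable (v n) μ) (hw : AEMeasurable w μ)
    (hwp : Integrable (fun x => ‖w x‖ ^ p) μ) {g : α → ℝ} (hg : Integrable g μ)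
    (hdom : ∀ᵐ x ∂μ, ∀ n, ‖v n x - w x‖ ^ p ≤ g x)
    (hlim : ∀ᵐ x ∂μ, Tendsto (fun n => v n x) atTop (𝓝 (w x))) :
    Tendsto (fun n => ∫ x, |F n x (v n x) - G x (w x)| ^ q ∂μ) atTop (𝓝 0) := by
  have hFvm : ∀ n, AEMeasurable (fun x => F n x (v n x)) μ :=
    fun n => .caratheodory_comp (hFm n) (hFc n) (hv n)
  have hGwm : AEMeasurable (fun x => G x (w x)) μ := .caratheodory_comp hGm hGc hw
  refine integral_zero α ℝ ▸ tendsto_integral_of_dominated_convergence (f := fun _ => 0)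
    (fun x => (4 * C) ^ q * (2 + 2 ^ p * (‖w x‖ ^ p + g x) + ‖w x‖ ^ p))
    (fun n => ?_) ?_ (fun n => ?_) ?_
  · exact (((hFvm n).sub hGwm).abs.pow_const q).aestronglyMeasurable
  · exact (((integrable_const 2).add ((hwp.add hg).const_mul _)).add hwp).const_mul _
  · filter_upwards [hFgrowth n, hGgrowth, hdom] with x hFx hGx hdx
    have hvx : ‖v n x‖ ^ p ≤ 2 ^ p * (‖w x‖ ^ p + g x) :=
      calc ‖v n x‖ ^ p ≤ (‖w x‖ + ‖v n x - w x‖) ^ p := by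
            gcongr; exact norm_le_norm_add_norm_sub' _ _
        _ ≤ 2 ^ p * (‖w x‖ ^ p + ‖v n x - w x‖ ^ p) :=
          Real.add_rpow_le_two_rpow_mul_add_rpow (norm_nonneg _) (norm_nonneg _) hp
        _ ≤ 2 ^ p * (‖w x‖ ^ p + g x) := by gcongr; exact hdx n
    rw [Real.norm_of_nonneg (by positivity)]
    calc |F n x (v n x) - G x (w x)| ^ q ≤ (4 * C) ^ q * (2 + ‖v n x‖ ^ p + ‖w x‖ ^ p) :=
          hγq ▸ Real.abs_sub_rpow_le_of_growth (norm_nonneg _) (norm_nonneg _) hC hq.le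
            (hFx _) (hGx _)
      _ ≤ _ := by gcongr
  · filter_upwards [hunif, hGc, hlim] with x hx hGx hvx
    have := ((tendsto_comp_of_forall_isCompact_tendstoUniformlyOn hx hGx.continuousAt
      hvx).sub_const (G x (w x))).abs.rpow_const (p := q) (Or.inr hq.le)
    rwa [sub_self, abs_zero, Real.zero_rpow hq.ne'] at this

end

theorem caratheodory_composition_convergence_general
    (N : ℕ)
    (Ω : Set (EuclideanSpace ℝ (Fin N)))
    (hΩbdd : Bornology.IsBounded Ω)
    (Hn : ℕ → EuclideanSpace ℝ (Fin N) → EuclideanSpace ℝ (Fin N) → ℝ)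
    (H : EuclideanSpace ℝ (Fin N) → EuclideanSpace ℝ (Fin N) → ℝ)
    -- the `Hₙ` and `H` are Carathéodory functions
    (hHnmeas : ∀ (n : ℕ) (ξ : EuclideanSpace ℝ (Fin N)), Measurable fun x => Hn n x ξ)
    (hHncont : ∀ n : ℕ, ∀ᵐ x ∂(volume.restrict Ω), Continuous fun ξ => Hn n x ξ)
    (hHmeas : ∀ ξ : EuclideanSpace ℝ (Fin N), Measurable fun x => H x ξ)
    (hHcont : ∀ᵐ x ∂(volume.restrict Ω), Continuous fun ξ => H x ξ)
    -- (a) uniform growth bound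
    (C γ : ℝ) (hC : 0 < C) (hγ : 0 < γ)
    (hgrowth : ∀ n : ℕ, ∀ᵐ x ∂(volume.restrict Ω),
      ∀ ξ : EuclideanSpace ℝ (Fin N), |Hn n x ξ| ≤ C * (1 + ‖ξ‖ ^ γ))
    -- (b) a.e. uniform convergence on compact sets
    (hunif : ∀ᵐ x ∂(volume.restrict Ω), ∀ K : Set (EuclideanSpace ℝ (Fin N)),
      IsCompact K → TendstoUniformlyOn (fun n ξ => Hn n x ξ) (H x) atTop K)
    -- `uₙ → u` in `L^p(Ω)^N`
    (p : ℝ) (hp : max 1 γ ≤ p)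
    (u : ℕ → EuclideanSpace ℝ (Fin N) → EuclideanSpace ℝ (Fin N))
    (ulim : EuclideanSpace ℝ (Fin N) → EuclideanSpace ℝ (Fin N))
    (humeas : ∀ n, AEMeasurable (u n) (volume.restrict Ω))
    (hulimmeas : AEMeasurable ulim (volume.restrict Ω))
    (huLp : ∀ n, Integrable (fun x => ‖u n x‖ ^ p) (volume.restrict Ω))
    (hulimLp : Integrable (fun x => ‖ulim x‖ ^ p) (volume.restrict Ω))
    (hconv : Tendsto (fun n => ∫ x in Ω, ‖u n x - ulim x‖ ^ p) atTop (𝓝 0)) :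
    -- conclusion: `Hₙ(·, uₙ) → H(·, u)` in `L^{p/γ}(Ω)`
    Tendsto (fun n => ∫ x in Ω, |Hn n x (u n x) - H x (ulim x)| ^ (p / γ)) atTop (𝓝 0) := by
  have : IsFiniteMeasure (volume.restrict Ω) :=
    isFiniteMeasure_restrict.2 hΩbdd.measure_lt_top.ne
  have hp0 : 0 < p := one_pos.trans_le ((le_max_left 1 γ).trans hp)
  have hHgrowth : ∀ᵐ x ∂(volume.restrict Ω), ∀ ξ, |H x ξ| ≤ C * (1 + ‖ξ‖ ^ γ) := by
    filter_upwards [ae_all_iff.2 hgrowth, hunif] with x hx hux ξ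
    exact le_of_tendsto ((hux {ξ} isCompact_singleton).tendsto_at rfl).abs
      (.of_forall fun n => hx n ξ)
  refine tendsto_of_subseq_tendsto fun ns hns => ?_
  obtain ⟨φ, hφ, g, hg, hdom, hlim⟩ := exists_subseq_dominated_ae_tendsto_zero
    (fun k => .of_forall fun x => Real.rpow_nonneg (norm_nonneg (u (ns k) x - ulim x)) p)
    (fun k => integrable_norm_sub_rpow hp0 (humeas _).aestronglyMeasurable
      hulimmeas.aestronglyMeasurable (huLp _) hulimLp)
    (hconv.comp hns)
  have hψ : Tendsto (ns ∘ φ) atTop atTop := hns.comp hφ.tendsto_atTop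
  refine ⟨φ, tendsto_integral_abs_sub_caratheodory_comp_rpow (F := fun k => Hn (ns (φ k)))
    (fun k => hHnmeas _) (fun k => hHncont _) hHmeas hHcont hC.le hp0.le (div_pos hp0 hγ)
    (mul_div_cancel₀ p hγ.ne') (fun k => hgrowth _) hHgrowth ?_ (fun k => humeas _) hulimmeas
    hulimLp hg hdom (hlim.mono fun x hx => tendsto_of_tendsto_norm_sub_rpow hp0 hx)⟩
  filter_upwards [hunif] with x hx K hK s hs
  exact hψ.eventually (hx K hK s hs)

/-- **Convergence of Carathéodory compositions in Lebesgue spaces** (Lemma A.1).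
If `Hₙ` are Carathéodory functions on `Ω × ℝ^N` with a uniform growth bound
`|Hₙ(x,ξ)| ≤ C(1 + |ξ|^γ)`, converging for a.e. `x` to a Carathéodory function `H`
uniformly on compact subsets of `ℝ^N`, and if `uₙ → u` in `L^p(Ω)^N` with
`p ∈ [max(1,γ), ∞)`, then `Hₙ(·, uₙ) → H(·, u)` in `L^{p/γ}(Ω)`. -/
theorem caratheodory_composition_convergence
    (N : ℕ) (hN : 0 < N)
    (Ω : Set (EuclideanSpace ℝ (Fin N)))
    (hΩmeas : MeasurableSet Ω) (hΩbdd : Bornology.IsBounded Ω)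
    (Hn : ℕ → EuclideanSpace ℝ (Fin N) → EuclideanSpace ℝ (Fin N) → ℝ)
    (H : EuclideanSpace ℝ (Fin N) → EuclideanSpace ℝ (Fin N) → ℝ)
    -- the `Hₙ` and `H` are Carathéodory functions
    (hHnmeas : ∀ (n : ℕ) (ξ : EuclideanSpace ℝ (Fin N)), Measurable fun x => Hn n x ξ)
    (hHncont : ∀ n : ℕ, ∀ᵐ x ∂(volume.restrict Ω), Continuous fun ξ => Hn n x ξ)
    (hHmeas : ∀ ξ : EuclideanSpace ℝ (Fin N), Measurable fun x => H x ξ)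
    (hHcont : ∀ᵐ x ∂(volume.restrict Ω), Continuous fun ξ => H x ξ)
    -- (a) uniform growth bound
    (C γ : ℝ) (hC : 0 < C) (hγ : 0 < γ)
    (hgrowth : ∀ n : ℕ, ∀ᵐ x ∂(volume.restrict Ω),
      ∀ ξ : EuclideanSpace ℝ (Fin N), |Hn n x ξ| ≤ C * (1 + ‖ξ‖ ^ γ))
    -- (b) a.e. uniform convergence on compact sets
    (hunif : ∀ᵐ x ∂(volume.restrict Ω), ∀ K : Set (EuclideanSpace ℝ (Fin N)),
      IsCompact K → TendstoUniformlyOn (fun n ξ => Hn n x ξ) (H x) atTop K)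
    -- `uₙ → u` in `L^p(Ω)^N`
    (p : ℝ) (hp : max 1 γ ≤ p)
    (u : ℕ → EuclideanSpace ℝ (Fin N) → EuclideanSpace ℝ (Fin N))
    (ulim : EuclideanSpace ℝ (Fin N) → EuclideanSpace ℝ (Fin N))
    (humeas : ∀ n, AEMeasurable (u n) (volume.restrict Ω))
    (hulimmeas : AEMeasurable ulim (volume.restrict Ω))
    (huLp : ∀ n, Integrable (fun x => ‖u n x‖ ^ p) (volume.restrict Ω))
    (hulimLp : Integrable (fun x => ‖ulim x‖ ^ p) (volume.restrict Ω))
    (hconv : Tendsto (fun n => ∫ x in Ω, ‖u n x - ulim x‖ ^ p) atTop (𝓝 0)) :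
    -- conclusion: `Hₙ(·, uₙ) → H(·, u)` in `L^{p/γ}(Ω)`
    Tendsto (fun n => ∫ x in Ω, |Hn n x (u n x) - H x (ulim x)| ^ (p / γ)) atTop (𝓝 0) :=
  caratheodory_composition_convergence_general N Ω hΩbdd Hn H hHnmeas hHncont hHmeas hHcont C γ hC
    hγ hgrowth hunif p hp u ulim humeas hulimmeas huLp hulimLp hconv
end

section
/- The self-similar function solves the radial advection-diffusion equation (Section 6.1). Let N ∈ ℕ, set d_m := 1/(2(N+1)) (equivalently N = 2/(4 d_m) − 1), and define ψ(z) = e^{−z} Σ_{k=0}^{N} z^k/k! and c(ρ,t) := ψ(ρ²/(4 d_m t)) for ρ > 0, t > 0. Then for all ρ > 0 and t > 0: ρ ∂_t c(ρ,t) − ∂_ρ( ρ d_m ∂_ρ c(ρ,t) − c(ρ,t) ) = 0 (this is the radial concentration equation ρ ∂_t c − ∂_ρ(ρ(d_m ∂_ρ c − u_ρ c)) = 0 with radial Darcy velocity u_ρ = 1/ρ). Moreover, for every fixed t > 0, c(ρ,t) → 1 as ρ → 0⁺ and c(ρ,t) → 0 as ρ → +∞. -/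
/-!
Write `z = ρ²/(4 d_m t)` and `P_k(z) = e^{-z} z^k / k!` (`poissonTerm k`), so that
`ψ_N = P_0 + ⋯ + P_N`. Since `P_{k+1}' = P_k - P_{k+1}`, the sum telescopes to `ψ_N' = -P_N`.
For `d_m = 1/(2(N+1))` the identity `z P_N = (N+1) P_{N+1}` turns the flux
`ρ d_m ∂_ρ c - c = -2 d_m z P_N(z) - ψ_N(z)` into `-ψ_{N+1}(z)`, whose `ρ`-derivative is
`P_{N+1}(z) ρ/(2 d_m t)`, which is exactly `ρ ∂_t c = ρ z P_N(z)/t`.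
-/

open Real Filter Topology

noncomputable section

/-- The analytical profile `ψ(z) = e^{−z} ∑_{k=0}^{N} z^k/k!`. -/
def ψ (N : ℕ) (z : ℝ) : ℝ :=
  Real.exp (-z) * ∑ k ∈ Finset.range (N + 1), z ^ k / (Nat.factorial k)

/-- The self-similar concentration `c(ρ,t) = ψ(ρ²/(4 d_m t))`. -/
def conc (N : ℕ) (dm : ℝ) (ρ t : ℝ) : ℝ :=
  ψ N (ρ ^ 2 / (4 * dm * t))

open scoped Nat

def poissonTerm (k : ℕ) (z : ℝ) : ℝ :=
  exp (-z) * z ^ k / k !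

lemma ψ_zero : ψ 0 = poissonTerm 0 := by
  funext z
  simp [ψ, poissonTerm]

lemma ψ_succ (N : ℕ) (z : ℝ) : ψ (N + 1) z = ψ N z + poissonTerm (N + 1) z := by
  rw [ψ, Finset.sum_range_succ, mul_add, ← ψ, poissonTerm, mul_div_assoc]

lemma ψ_apply_zero (N : ℕ) : ψ N 0 = 1 := by
  induction N with
  | zero => simp [ψ_zero, poissonTerm]
  | succ N ih => simp [ψ_succ, ih, poissonTerm]

lemma continuous_ψ (N : ℕ) : Continuous (ψ N) := by
  unfold ψ
  fun_prop

lemma succ_mul_poissonTerm_succ (k : ℕ) (z : ℝ) :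
    (k + 1) * poissonTerm (k + 1) z = z * poissonTerm k z := by
  simp only [poissonTerm, Nat.factorial_succ, Nat.cast_mul, Nat.cast_succ]
  field_simp
  ring

lemma hasDerivAt_poissonTerm_zero (z : ℝ) : HasDerivAt (poissonTerm 0) (-poissonTerm 0 z) z := by
  unfold poissonTerm
  simpa using (hasDerivAt_neg z).exp

lemma hasDerivAt_poissonTerm_succ (k : ℕ) (z : ℝ) :
    HasDerivAt (poissonTerm (k + 1)) (poissonTerm k z - poissonTerm (k + 1) z) z := by
  unfold poissonTerm
  refine ((((hasDerivAt_neg z).exp).mul (hasDerivAt_pow (k + 1) z)).div_const _).congr_deriv ?_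
  simp only [Nat.factorial_succ, Nat.cast_mul, Nat.cast_succ, Nat.add_sub_cancel]
  field_simp
  ring

lemma hasDerivAt_ψ (N : ℕ) (z : ℝ) : HasDerivAt (ψ N) (-poissonTerm N z) z := by
  induction N with
  | zero => simpa [ψ_zero] using hasDerivAt_poissonTerm_zero z
  | succ N ih =>
    rw [show ψ (N + 1) = fun z => ψ N z + poissonTerm (N + 1) z from funext (ψ_succ N)]
    exact (ih.add (hasDerivAt_poissonTerm_succ N z)).congr_deriv (by ring)

lemma tendsto_poissonTerm_atTop (k : ℕ) : Tendsto (poissonTerm k) atTop (𝓝 0) := by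
  unfold poissonTerm
  simpa [mul_comm] using
    (tendsto_pow_mul_exp_neg_atTop_nhds_zero k).div_const (k ! : ℝ)

lemma tendsto_ψ_atTop (N : ℕ) : Tendsto (ψ N) atTop (𝓝 0) := by
  induction N with
  | zero => simpa [ψ_zero] using tendsto_poissonTerm_atTop 0
  | succ N ih =>
    rw [show ψ (N + 1) = fun z => ψ N z + poissonTerm (N + 1) z from funext (ψ_succ N)]
    simpa using ih.add (tendsto_poissonTerm_atTop (N + 1))

section conc

variable (N : ℕ) (dm : ℝ)

lemma hasDerivAt_conc_time (ρ : ℝ) {t : ℝ} (ht : t ≠ 0) :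
    HasDerivAt (fun τ => conc N dm ρ τ)
      (poissonTerm N (ρ ^ 2 / (4 * dm * t)) * (ρ ^ 2 / (4 * dm * t)) / t) t := by
  have hz : HasDerivAt (fun τ => ρ ^ 2 / (4 * dm * τ)) (-(ρ ^ 2 / (4 * dm * t)) / t) t := by
    rw [show (fun τ => ρ ^ 2 / (4 * dm * τ)) = fun τ => ρ ^ 2 / (4 * dm) * τ⁻¹ by
      funext τ
      ring]
    exact ((hasDerivAt_inv ht).const_mul _).congr_deriv (by ring)
  exact ((hasDerivAt_ψ N _).comp t hz).congr_deriv (by ring)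

lemma hasDerivAt_conc_space (t r : ℝ) :
    HasDerivAt (fun r => conc N dm r t)
      (-poissonTerm N (r ^ 2 / (4 * dm * t)) * (2 * r / (4 * dm * t))) r := by
  refine ((hasDerivAt_ψ N _).comp r ((hasDerivAt_pow 2 r).div_const (4 * dm * t))).congr_deriv ?_
  norm_num

variable {N dm}

lemma poissonTerm_succ_eq (hdm : dm = 1 / (2 * ((N : ℝ) + 1))) (z : ℝ) :
    poissonTerm (N + 1) z = 2 * dm * (z * poissonTerm N z) := by
  rw [← succ_mul_poissonTerm_succ, hdm]
  field_simp

lemma flux_eq_neg_conc_succ (hdm : dm = 1 / (2 * ((N : ℝ) + 1))) (t : ℝ) :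
    (fun r => r * dm * deriv (fun r' => conc N dm r' t) r - conc N dm r t)
      = fun r => -conc (N + 1) dm r t := by
  funext r
  rw [(hasDerivAt_conc_space N dm t r).deriv, conc, conc, ψ_succ, poissonTerm_succ_eq hdm]
  ring

lemma radial_equation (hdm : dm = 1 / (2 * ((N : ℝ) + 1))) (ρ : ℝ) {t : ℝ} (ht : t ≠ 0) :
    ρ * deriv (fun τ => conc N dm ρ τ) t
      - deriv (fun r => r * dm * deriv (fun r' => conc N dm r' t) r - conc N dm r t) ρ = 0 := by
  rw [(hasDerivAt_conc_time N dm ρ ht).deriv, flux_eq_neg_conc_succ hdm,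
    deriv.fun_neg, (hasDerivAt_conc_space (N + 1) dm t ρ).deriv, poissonTerm_succ_eq hdm]
  field_simp
  ring

lemma tendsto_conc_nhdsGT_zero (t : ℝ) :
    Tendsto (fun ρ => conc N dm ρ t) (𝓝[>] 0) (𝓝 1) := by
  have hz : Tendsto (fun ρ : ℝ => ρ ^ 2 / (4 * dm * t)) (𝓝[>] 0) (𝓝 0) := by
    simpa using (((continuous_pow 2).div_const (4 * dm * t)).tendsto 0).mono_left
      nhdsWithin_le_nhds
  have h := ((continuous_ψ N).tendsto 0).comp hz
  rwa [ψ_apply_zero] at h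

lemma tendsto_conc_atTop {t : ℝ} (ht : 0 < 4 * dm * t) :
    Tendsto (fun ρ => conc N dm ρ t) atTop (𝓝 0) :=
  (tendsto_ψ_atTop N).comp ((tendsto_pow_atTop two_ne_zero).atTop_div_const ht)

end conc

/-- **The self-similar function solves the radial advection-diffusion equation**
(Section 6.1). With `d_m = 1/(2(N+1))` and `c(ρ,t) = ψ(ρ²/(4 d_m t))`, one has
`ρ ∂_t c − ∂_ρ(ρ d_m ∂_ρ c − c) = 0` on `(0,∞)×(0,∞)` (this is the radial equation
`ρ ∂_t c − ∂_ρ(ρ(d_m ∂_ρ c − u_ρ c)) = 0` with Darcy velocity `u_ρ = 1/ρ`), and for every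
`t > 0`, `c(ρ,t) → 1` as `ρ → 0⁺` and `c(ρ,t) → 0` as `ρ → +∞`. -/
theorem self_similar_solution (N : ℕ) (dm : ℝ) (hdm : dm = 1 / (2 * ((N : ℝ) + 1))) :
    (∀ ρ : ℝ, 0 < ρ → ∀ t : ℝ, 0 < t →
      ρ * deriv (fun τ => conc N dm ρ τ) t
        - deriv (fun r => r * dm * deriv (fun r' => conc N dm r' t) r - conc N dm r t) ρ
        = 0) ∧
    (∀ t : ℝ, 0 < t → Tendsto (fun ρ => conc N dm ρ t) (𝓝[>] 0) (𝓝 1)) ∧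
    (∀ t : ℝ, 0 < t → Tendsto (fun ρ => conc N dm ρ t) atTop (𝓝 0)) := by
  have hdm0 : 0 < dm := by
    rw [hdm]
    positivity
  exact ⟨fun ρ _ t ht => radial_equation hdm ρ ht.ne',
    fun t _ => tendsto_conc_nhdsGT_zero t,
    fun t ht => tendsto_conc_atTop (by positivity)⟩
end
end
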